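/- Funk parabola of type 1 through the origin: let y₀ ∈ (−1,1) and F = (f₀,g₀) ∈ B² with g₀ ≠ y₀ and F ≠ (0,0). Then the origin belongs to the Funk parabola of type 1, i.e. d_F(F,(0,0)) = ln ρ(y₀,0), if and only if f₀² + g₀² = y₀²; that is, if and only if the Euclidean distances from F and from the line s: y = y₀ to the origin coincide. -/

import Mathlib

/-- The Funk distance on the open unit ball of Euclidean n-space:
`d_F(P,Q) = ln((√k − ⟨P, Q−P⟩)/(√k − ⟨Q, Q−P⟩))` with
`k = ⟨P, Q−P⟩² + (1 − ‖P‖²)‖Q−P‖²`. -/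
noncomputable def funkDist {n : ℕ} (P Q : EuclideanSpace ℝ (Fin n)) : ℝ :=
  Real.log
    ((Real.sqrt ((inner ℝ P (Q - P) : ℝ) ^ 2 + (1 - ‖P‖ ^ 2) * ‖Q - P‖ ^ 2) - (inner ℝ P (Q - P) : ℝ)) /
     (Real.sqrt ((inner ℝ P (Q - P) : ℝ) ^ 2 + (1 - ‖P‖ ^ 2) * ‖Q - P‖ ^ 2) - (inner ℝ Q (Q - P) : ℝ)))

/-- `ρ(ε,η) = (1 + sgn(ε−η)·ε)/(1 + sgn(ε−η)·η)`. -/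
noncomputable def rho (ε η : ℝ) : ℝ :=
  (1 + Real.sign (ε - η) * ε) / (1 + Real.sign (ε - η) * η)

/-- The point `(a,b)` of the Euclidean plane. -/
def pt (a b : ℝ) : EuclideanSpace ℝ (Fin 2) := WithLp.toLp 2 ![a, b]

/-!
The ray from `P` through the origin leaves the disk at `-P/‖P‖`, at distance `1` from the origin,
so `d_F(P, 0) = ln(1 + ‖P‖)`; on the other side `ρ(y₀, 0) = 1 + |y₀|`. As `ln` is injective
on the positive reals, the origin is on the parabola exactly when `‖F‖ = |y₀|`.
-/

open Real

theorem pt_zero_zero : pt 0 0 = 0 := by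
  ext i
  fin_cases i <;> simp [pt]

theorem norm_pt_sq (a b : ℝ) : ‖pt a b‖ ^ 2 = a ^ 2 + b ^ 2 := by
  simp [EuclideanSpace.norm_sq_eq, pt, Fin.sum_univ_two]

theorem funkDist_zero_right {n : ℕ} (P : EuclideanSpace ℝ (Fin n)) :
    funkDist P 0 = log (1 + ‖P‖) := by
  have hk : (-‖P‖ ^ 2) ^ 2 + (1 - ‖P‖ ^ 2) * ‖P‖ ^ 2 = ‖P‖ ^ 2 := by ring
  rcases eq_or_ne P 0 with rfl | hP
  -- both sides vanish, the left one as `log (0 / 0)`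
  · simp [funkDist]
  have hr : ‖P‖ ≠ 0 := norm_ne_zero_iff.mpr hP
  rw [funkDist, zero_sub, inner_neg_right, real_inner_self_eq_norm_sq, inner_zero_left,
    norm_neg, hk, sqrt_sq (norm_nonneg P), sub_neg_eq_add, sub_zero]
  congr 1
  field_simp

theorem rho_zero_right (ε : ℝ) : rho ε 0 = 1 + |ε| := by
  rcases lt_trichotomy ε 0 with h | rfl | h
  · simp [rho, Real.sign_of_neg h, abs_of_neg h]
  · simp [rho]
  · simp [rho, Real.sign_of_pos h, abs_of_pos h]

theorem log_one_add_eq_log_one_add_iff {a b : ℝ} (ha : 0 ≤ a) (hb : 0 ≤ b) :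
    log (1 + a) = log (1 + b) ↔ a = b := by
  refine ⟨fun h => ?_, fun h => h ▸ rfl⟩
  have := log_injOn_pos (Set.mem_Ioi.mpr (by linarith)) (Set.mem_Ioi.mpr (by linarith)) h
  linarith

theorem funk_parabola_stmt13_general (y₀ f₀ g₀ : ℝ) :
    funkDist (pt f₀ g₀) (pt 0 0) = Real.log (rho y₀ 0) ↔ f₀ ^ 2 + g₀ ^ 2 = y₀ ^ 2 := by
  rw [pt_zero_zero, funkDist_zero_right, rho_zero_right,
    log_one_add_eq_log_one_add_iff (norm_nonneg _) (abs_nonneg _), ← norm_pt_sq, ← sq_abs y₀]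
  exact (sq_eq_sq₀ (norm_nonneg _) (abs_nonneg _)).symm

/-- The origin lies on the type-1 Funk parabola with focus `F = (f₀,g₀)` and directrix
`y = y₀` iff `f₀² + g₀² = y₀²`, i.e. iff the Euclidean distances from `F` and from the
directrix to the origin coincide. -/
theorem funk_parabola_stmt13 (y₀ f₀ g₀ : ℝ)
    (hy₀ : -1 < y₀ ∧ y₀ < 1) (hF : ‖pt f₀ g₀‖ < 1) (hgy : g₀ ≠ y₀)
    (hFne : pt f₀ g₀ ≠ pt 0 0) :
    funkDist (pt f₀ g₀) (pt 0 0) = Real.log (rho y₀ 0) ↔ f₀ ^ 2 + g₀ ^ 2 = y₀ ^ 2 :=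
  funk_parabola_stmt13_general y₀ f₀ g₀
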